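/- The singular series is monotone along primorials and dominates all smaller even values: if $d$ is a positive even integer with $d < p_k^{\sharp}$, then $\mathfrak{S}(d) \le \mathfrak{S}(p_{k-1}^{\sharp}) < \mathfrak{S}(p_k^{\sharp})$. -/

import Mathlib

/-- The `k`-th nthPrimorial, the product of the first `k` primes. -/
noncomputable def nthPrimorial (k : ℕ) : ℕ := ∏ j ∈ Finset.range k, Nat.nth Nat.Prime j

/-- The singular series `𝔖(d) = 2 C₂ ∏_{p ∣ d, p > 2} (1 + 1/(p-2))` with constant `C₂`. -/
noncomputable def singSeries (C₂ : ℝ) (d : ℕ) : ℝ :=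
  2 * C₂ * ∏ p ∈ d.primeFactors.filter (fun p => 2 < p), (1 + 1 / ((p : ℝ) - 2))

/-!
Let `A` be the set of odd prime factors of `d`. Listing `A` increasingly, its `i`-th element
is at least the `i`-th odd prime, and each factor `1 + 1/(p - 2)` of `𝔖` decreases in `p`; so
`𝔖(d)` is at most the value of `𝔖` at the primorial with as many odd prime factors. Since `d`
is even and `d < p_k^♯`, comparing `d ≥ ∏_{p ∣ d} p` with the primorial of the same number of
primes shows that `d` has at most `k - 1` prime factors, i.e. `#A ≤ k - 2`. Finally the factors
are all `> 1`, so the primorial values of `𝔖` increase strictly.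
-/

open Finset Nat

section Enumeration

variable {P : ℕ → Prop} [DecidablePred P]

theorem Nat.nth_card_le_of_forall_lt (hP : (Set.ofPred P).Infinite) {s : Finset ℕ} {a : ℕ}
    (ha : P a) (hs : ∀ x ∈ s, P x ∧ x < a) : nth P #s ≤ a := by
  have hcard : #s ≤ count P a := by
    rw [count_eq_card_filter_range]
    exact card_le_card fun x hx ↦ by simpa [and_comm] using hs x hx
  calc nth P #s ≤ nth P (count P a) := (nth_le_nth hP).2 hcard
    _ = a := nth_count ha

variable {R : Type*} [CommMonoidWithZero R] [PartialOrder R] [ZeroLEOneClass R] [PosMulMono R]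
  [MulPosMono R] {f : ℕ → R}

theorem Finset.prod_range_nth_le_prod (hP : (Set.ofPred P).Infinite) {A : Finset ℕ}
    (hA : ∀ a ∈ A, P a) (hf₀ : ∀ n, P n → 0 ≤ f n) (hf : MonotoneOn f (Set.ofPred P)) :
    ∏ i ∈ range #A, f (nth P i) ≤ ∏ a ∈ A, f a := by
  induction A using Finset.induction_on_max with
  | empty => simp
  | insert a s hlt ih =>
    have has : a ∉ s := fun h ↦ (hlt a h).false
    have hs : ∀ x ∈ s, P x := fun x hx ↦ hA x (mem_insert_of_mem hx)
    have ha : P a := hA a (mem_insert_self a s)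
    have hnth : nth P #s ≤ a := nth_card_le_of_forall_lt hP ha fun x hx ↦ ⟨hs x hx, hlt x hx⟩
    rw [card_insert_of_notMem has, prod_range_succ, prod_insert has, mul_comm (f a)]
    exact mul_le_mul (ih hs) (hf (nth_mem_of_infinite hP _) ha hnth)
      (hf₀ _ (nth_mem_of_infinite hP _)) (prod_nonneg fun x hx ↦ hf₀ x (hs x hx))

theorem Finset.prod_le_prod_range_nth (hP : (Set.ofPred P).Infinite) {A : Finset ℕ}
    (hA : ∀ a ∈ A, P a) (hf₀ : ∀ n, P n → 0 ≤ f n) (hf : AntitoneOn f (Set.ofPred P)) :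
    ∏ a ∈ A, f a ≤ ∏ i ∈ range #A, f (nth P i) := by
  induction A using Finset.induction_on_max with
  | empty => simp
  | insert a s hlt ih =>
    have has : a ∉ s := fun h ↦ (hlt a h).false
    have hs : ∀ x ∈ s, P x := fun x hx ↦ hA x (mem_insert_of_mem hx)
    have ha : P a := hA a (mem_insert_self a s)
    have hnth : nth P #s ≤ a := nth_card_le_of_forall_lt hP ha fun x hx ↦ ⟨hs x hx, hlt x hx⟩
    rw [card_insert_of_notMem has, prod_range_succ, prod_insert has, mul_comm (f a)]
    exact mul_le_mul (ih hs) (hf (nth_mem_of_infinite hP _) ha hnth) (hf₀ a ha)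
      (prod_nonneg fun i _ ↦ hf₀ _ (nth_mem_of_infinite hP i))

end Enumeration

theorem nthPrimorial_monotone : Monotone nthPrimorial := fun _ _ hmn ↦
  prod_le_prod_of_subset_of_one_le' (range_subset_range.2 hmn)
    fun i _ _ ↦ (prime_nth_prime i).one_le

theorem nthPrimorial_card_primeFactors_le {d : ℕ} (hd : d ≠ 0) :
    nthPrimorial #d.primeFactors ≤ d :=
  calc nthPrimorial #d.primeFactors ≤ ∏ p ∈ d.primeFactors, p :=
        prod_range_nth_le_prod infinite_setOfPred_prime (fun _ hp ↦ prime_of_mem_primeFactors hp)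
          (fun _ _ ↦ Nat.zero_le _) (monotone_id.monotoneOn _)
    _ ≤ d := Nat.le_of_dvd (Nat.pos_of_ne_zero hd) (prod_primeFactors_dvd d)

theorem two_lt_nth_prime_add_one (i : ℕ) : 2 < nth Nat.Prime (i + 1) :=
  nth_prime_zero_eq_two ▸ nth_strictMono infinite_setOfPred_prime i.succ_pos

theorem infinite_setOfPred_prime_and_two_lt : {p | p.Prime ∧ 2 < p}.Infinite :=
  Set.infinite_of_injective_forall_mem
    ((nth_strictMono infinite_setOfPred_prime).injective.comp (add_left_injective 1))
    fun i ↦ ⟨prime_nth_prime (i + 1), two_lt_nth_prime_add_one i⟩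

theorem nth_prime_and_two_lt (i : ℕ) :
    nth (fun p ↦ p.Prime ∧ 2 < p) i = nth Nat.Prime (i + 1) := by
  refine (eq_nth_of_strictMonoOn_of_mapsTo_of_surjOn (fun i ↦ nth Nat.Prime (i + 1))
    ?_ ?_ ?_ (fun hf ↦ absurd hf infinite_setOfPred_prime_and_two_lt)).symm
  · rintro q ⟨hq, hq2⟩
    have hcount : count Nat.Prime q ≠ 0 := fun h ↦ by
      have := nth_count hq
      rw [h, nth_prime_zero_eq_two] at this
      omega
    refine ⟨count Nat.Prime q - 1, fun hf ↦ absurd hf infinite_setOfPred_prime_and_two_lt, ?_⟩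
    simp only [Nat.sub_add_cancel (Nat.one_le_iff_ne_zero.2 hcount), nth_count hq]
  · exact fun i _ ↦ ⟨prime_nth_prime (i + 1), two_lt_nth_prime_add_one i⟩
  · exact ((nth_strictMono infinite_setOfPred_prime).comp
      (strictMono_id.add_const 1)).strictMonoOn _

theorem primeFactors_nthPrimorial (k : ℕ) :
    (nthPrimorial k).primeFactors = (range k).image (nth Nat.Prime) := by
  rw [nthPrimorial, ← prod_image (f := fun q ↦ q) (g := nth Nat.Prime) fun i _ j _ h ↦
    (nth_strictMono infinite_setOfPred_prime).injective h]
  exact primeFactors_prod fun p hp ↦ by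
    obtain ⟨i, -, rfl⟩ := mem_image.1 hp
    exact prime_nth_prime i

theorem filter_two_lt_primeFactors_nthPrimorial_succ (m : ℕ) :
    (nthPrimorial (m + 1)).primeFactors.filter (fun p ↦ 2 < p) =
      (range m).image (nth fun p ↦ p.Prime ∧ 2 < p) := by
  ext q
  simp only [primeFactors_nthPrimorial, mem_filter, mem_image, mem_range, nth_prime_and_two_lt]
  constructor
  · rintro ⟨⟨i, hi, rfl⟩, h2⟩
    have hi0 : i ≠ 0 := by rintro rfl; rw [nth_prime_zero_eq_two] at h2; omega
    exact ⟨i - 1, by omega, by rw [Nat.sub_add_cancel (Nat.one_le_iff_ne_zero.2 hi0)]⟩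
  · rintro ⟨i, hi, rfl⟩
    exact ⟨⟨i + 1, by omega, rfl⟩, two_lt_nth_prime_add_one i⟩

theorem card_filter_two_lt_primeFactors_lt {d m : ℕ} (hd : d ≠ 0) (hde : Even d)
    (hdm : d < nthPrimorial (m + 1)) : #(d.primeFactors.filter (fun p ↦ 2 < p)) < m := by
  have hcard : #d.primeFactors < m + 1 := by
    by_contra! h
    exact (nthPrimorial_monotone h |>.trans (nthPrimorial_card_primeFactors_le hd)).not_gt hdm
  have hsub : d.primeFactors.filter (fun p ↦ 2 < p) ⊂ d.primeFactors :=
    filter_ssubset.2 ⟨2, mem_primeFactors.2 ⟨prime_two, hde.two_dvd, hd⟩, lt_irrefl 2⟩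
  have := card_lt_card hsub
  omega

noncomputable def singFactor (p : ℕ) : ℝ := 1 + 1 / ((p : ℝ) - 2)

theorem singSeries_eq_prod_singFactor (C₂ : ℝ) (d : ℕ) :
    singSeries C₂ d = 2 * C₂ * ∏ p ∈ d.primeFactors.filter (fun p ↦ 2 < p), singFactor p :=
  rfl

theorem one_lt_singFactor {p : ℕ} (hp : 2 < p) : 1 < singFactor p := by
  have : (0 : ℝ) < p - 2 := sub_pos.2 (by exact_mod_cast hp)
  simpa [singFactor] using this

theorem singFactor_antitoneOn : AntitoneOn singFactor {p | 2 < p} := by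
  intro p hp q _ hpq
  have : (0 : ℝ) < p - 2 := sub_pos.2 (by exact_mod_cast hp)
  unfold singFactor
  gcongr

theorem singSeries_nthPrimorial_succ (C₂ : ℝ) (m : ℕ) :
    singSeries C₂ (nthPrimorial (m + 1)) =
      2 * C₂ * ∏ i ∈ range m, singFactor (nth (fun p ↦ p.Prime ∧ 2 < p) i) := by
  rw [singSeries_eq_prod_singFactor, filter_two_lt_primeFactors_nthPrimorial_succ,
    prod_image fun i _ j _ h ↦ (nth_strictMono infinite_setOfPred_prime_and_two_lt).injective h]

theorem prod_singFactor_le_prod_range_nth {A : Finset ℕ} (hA : ∀ p ∈ A, p.Prime ∧ 2 < p) :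
    ∏ p ∈ A, singFactor p ≤ ∏ i ∈ range #A, singFactor (nth (fun p ↦ p.Prime ∧ 2 < p) i) :=
  prod_le_prod_range_nth infinite_setOfPred_prime_and_two_lt hA
    (fun _ hp ↦ zero_le_one.trans (one_lt_singFactor hp.2).le)
    (singFactor_antitoneOn.mono fun _ hp ↦ hp.2)

theorem strictMono_prod_range_singFactor_nth :
    StrictMono fun m ↦ ∏ i ∈ range m, singFactor (nth (fun p ↦ p.Prime ∧ 2 < p) i) := by
  have hfactor (i : ℕ) : 1 < singFactor (nth (fun p ↦ p.Prime ∧ 2 < p) i) :=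
    one_lt_singFactor (nth_mem_of_infinite infinite_setOfPred_prime_and_two_lt i).2
  refine strictMono_nat_of_lt_succ fun m ↦ ?_
  rw [prod_range_succ]
  exact lt_mul_of_one_lt_right (prod_pos fun i _ ↦ zero_lt_one.trans (hfactor i)) (hfactor m)

theorem singSeries_monotone_primorial (C₂ : ℝ) (hC₂ : 0 < C₂) (k d : ℕ) (hk : 2 ≤ k)
    (hd : 0 < d) (hde : Even d) (hdk : d < nthPrimorial k) :
    singSeries C₂ d ≤ singSeries C₂ (nthPrimorial (k - 1)) ∧
      singSeries C₂ (nthPrimorial (k - 1)) < singSeries C₂ (nthPrimorial k) := by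
  obtain ⟨m, rfl⟩ : ∃ m, k = m + 2 := ⟨k - 2, by omega⟩
  have h2C₂ : 0 < 2 * C₂ := by positivity
  have hS := strictMono_prod_range_singFactor_nth
  set A := d.primeFactors.filter (fun p ↦ 2 < p)
  have hA : #A ≤ m := Nat.lt_succ_iff.1 (card_filter_two_lt_primeFactors_lt hd.ne' hde hdk)
  rw [show m + 2 - 1 = m + 1 by omega, singSeries_nthPrimorial_succ, singSeries_nthPrimorial_succ]
  refine ⟨?_, mul_lt_mul_of_pos_left (hS m.lt_succ_self) h2C₂⟩
  rw [singSeries_eq_prod_singFactor]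
  gcongr
  exact (prod_singFactor_le_prod_range_nth fun p hp ↦
    ⟨prime_of_mem_primeFactors (mem_filter.1 hp).1, (mem_filter.1 hp).2⟩).trans (hS.monotone hA)
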